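/- arXiv:1409.8480 — 2 statements merged into one kernel-verified Lean document; each statement's English description precedes it below -/
import Mathlib

section
/- The null space of Λ is contained in the symmetric subspace: every v ∈ ℂ^N ⊗ ℂ^N with Λv = 0 satisfies P·v = v, where P is the swap operator determined by P(x ⊗ y) = y ⊗ x. -/
open Matrix Kronecker Finset
open scoped ComplexOrder

noncomputable section

/-- A Majorana family: `2*m` Hermitian `2^m × 2^m` complex matrices squaring to the
identity and pairwise anticommuting. -/
structure MajoranaFamily (m : ℕ) where
  c : Fin (2*m) → Matrix (Fin (2^m)) (Fin (2^m)) ℂ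
  herm : ∀ j, (c j).IsHermitian
  sq : ∀ j, c j * c j = 1
  anticomm : ∀ j k, j ≠ k → c j * c k = -(c k * c j)

abbrev Mat (m : ℕ) := Matrix (Fin (2^m)) (Fin (2^m)) ℂ
abbrev Mat2 (m : ℕ) := Matrix (Fin (2^m) × Fin (2^m)) (Fin (2^m) × Fin (2^m)) ℂ
abbrev MatN (m n : ℕ) := Matrix (Fin n → Fin (2^m)) (Fin n → Fin (2^m)) ℂ

variable {m : ℕ}

/-- A state: a positive semidefinite matrix of trace `1`. -/
def IsState {ι : Type*} [Fintype ι] (ρ : Matrix ι ι ℂ) : Prop :=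
  ρ.PosSemidef ∧ ρ.trace = 1

/-- The trace norm `‖X‖₁ = Tr √(XᴴX)`. -/
def traceNorm {ι : Type*} [Fintype ι] [DecidableEq ι] (X : Matrix ι ι ℂ) : ℝ :=
  (((Matrix.posSemidef_conjTranspose_mul_self X).1.eigenvectorUnitary.1 *
    diagonal (((↑) : ℝ → ℂ) ∘ Real.sqrt ∘ (Matrix.posSemidef_conjTranspose_mul_self X).1.eigenvalues) *
    (star (Matrix.posSemidef_conjTranspose_mul_self X).1.eigenvectorUnitary : Matrix ι ι ℂ)).trace).re

/-- The rotated Majorana operators `c̃_j = Σ_i R_{ij} c_i`. -/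
def tilde (F : MajoranaFamily m) (R : Matrix (Fin (2*m)) (Fin (2*m)) ℝ)
    (j : Fin (2*m)) : Mat m :=
  ∑ i, (R i j : ℂ) • F.c i

/-- Standard-form Gaussian state `2^{-m} ∏_{k=1}^m (I + i λ_k c̃_{2k-1} c̃_{2k})`
(ordered product; the factors commute). -/
def gaussStd (F : MajoranaFamily m) (R : Matrix (Fin (2*m)) (Fin (2*m)) ℝ)
    (lam : Fin m → ℝ) : Mat m :=
  ((2:ℂ)^m)⁻¹ • (List.ofFn (fun k : Fin m =>
    (1 : Mat m) + (Complex.I * (lam k : ℂ)) •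
      (tilde F R ⟨2*k.val, by omega⟩ * tilde F R ⟨2*k.val+1, by omega⟩))).prod

/-- A pure Gaussian state: a standard-form Gaussian state with all `λ_k ∈ {-1,1}`,
for some `R ∈ SO(2m,ℝ)`. -/
def IsPureGaussian (F : MajoranaFamily m) (ρ : Mat m) : Prop :=
  ∃ (R : Matrix (Fin (2*m)) (Fin (2*m)) ℝ) (lam : Fin m → ℝ),
    Rᵀ * R = 1 ∧ R.det = 1 ∧ (∀ k, lam k = 1 ∨ lam k = -1) ∧ ρ = gaussStd F R lam

/-- A convex-Gaussian state: a finite convex combination of pure Gaussian states. -/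
def IsConvexGaussian (F : MajoranaFamily m) (ρ : Mat m) : Prop :=
  ∃ (k : ℕ) (p : Fin k → ℝ) (g : Fin k → Mat m),
    (∀ i, 0 ≤ p i) ∧ (∑ i, p i) = 1 ∧ (∀ i, IsPureGaussian F (g i)) ∧
    ρ = ∑ i, p i • g i

/-- `Λ = Σ_j c_j ⊗ c_j` on `ℂ^N ⊗ ℂ^N`. -/
def Lambda (F : MajoranaFamily m) : Mat2 m := ∑ j, F.c j ⊗ₖ F.c j

/-- Ordered product `c_{a_1} ⋯ c_{a_r}` over a finite set `S = {a_1 < … < a_r}`. -/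
def majProd (F : MajoranaFamily m) (S : Finset (Fin (2*m))) : Mat m :=
  ((S.sort (· ≤ ·)).map F.c).prod

/-- An even operator: a complex linear combination of the identity and products of
an even number of distinct Majorana operators. -/
def IsEven (F : MajoranaFamily m) (X : Mat m) : Prop :=
  X ∈ Submodule.span ℂ {Y : Mat m | ∃ S : Finset (Fin (2*m)), Even S.card ∧ Y = majProd F S}

/-- The Hermitian correlator `i^k c_{a_1} ⋯ c_{a_{2k}}` associated to a set of
cardinality `2k`. -/
def corrOp (F : MajoranaFamily m) (S : Finset (Fin (2*m))) : Mat m :=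
  (Complex.I ^ (S.card / 2)) • majProd F S

/-- The operator acting as `A` on the `k`-th tensor factor of `(ℂ^N)^{⊗n}` and as the
identity on the other factors. -/
def embedAt (n : ℕ) (k : Fin n) (A : Mat m) : MatN m n :=
  fun x y => A (x k) (y k) * ∏ l ∈ Finset.univ.erase k, (if x l = y l then 1 else 0)

/-- `Λ^{k,l} = Σ_j c_j^{(k)} c_j^{(l)}` on `(ℂ^N)^{⊗n}`. -/
def LambdaKL (F : MajoranaFamily m) (n : ℕ) (k l : Fin n) : MatN m n :=
  ∑ j, embedAt n k (F.c j) * embedAt n l (F.c j)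

/-- Partial trace of an operator on `(ℂ^N)^{⊗n}` over the tensor factors `2, …, n`. -/
def ptrRest (n : ℕ) (hn : 1 ≤ n) (ρ : MatN m n) : Mat m := fun a b =>
  ∑ g : Fin (n-1) → Fin (2^m),
    ρ (fun i => if h : i.val = 0 then a else g ⟨i.val - 1, by omega⟩)
      (fun i => if h : i.val = 0 then b else g ⟨i.val - 1, by omega⟩)

/-- `ρ` has an `n`-Gaussian-symmetric extension. -/
def HasGSExt (F : MajoranaFamily m) (n : ℕ) (hn : 1 ≤ n) (ρ : Mat m) : Prop :=
  ∃ ext : MatN m n, IsState ext ∧ ptrRest n hn ext = ρ ∧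
    ∀ k l : Fin n, k ≠ l → LambdaKL F n k l * ext = 0

/-- `‖Λ‖₁ = 2(m+1) C(2m, m+1)`. -/
def lambdaNorm (m : ℕ) : ℝ := 2*(m+1) * (Nat.choose (2*m) (m+1) : ℝ)

/-- `ε(n) = min {2, 10 ‖Λ‖₁² 2^{2m} n^{-1/3}}`. -/
def epsB (m n : ℕ) : ℝ :=
  min 2 (10 * lambdaNorm m ^ 2 * 2^(2*m) / (n:ℝ) ^ ((1:ℝ)/3))

/-- `χ(n) = (ε(n)/2) (2m)!/m!`. -/
def chiB (m n : ℕ) : ℝ :=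
  epsB m n / 2 * ((Nat.factorial (2*m) : ℝ) / (Nat.factorial m : ℝ))

/-- `δ(n) = χ(n)/(1+χ(n))`. -/
def deltaB (m n : ℕ) : ℝ := chiB m n / (1 + chiB m n)

/-- The parity operator `P = i^m c_1 ⋯ c_{2m}`. -/
def parityOp (F : MajoranaFamily m) : Mat m :=
  (Complex.I ^ m) • (((List.finRange (2*m)).map F.c).prod)

/-- The operator `I^{⊗ r} ⊗ c_s ⊗ P^{⊗(n-r-1)}` on `(ℂ^N)^{⊗n}` (0-based position `r`). -/
def dOp (F : MajoranaFamily m) (n : ℕ) (r : Fin n) (s : Fin (2*m)) : MatN m n :=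
  fun x y => ∏ l : Fin n,
    if l < r then (if x l = y l then 1 else 0)
    else if l = r then F.c s (x l) (y l)
    else parityOp F (x l) (y l)

/-- The family `d_1, …, d_{2mn}`, where `d_{2m(r-1)+s} = I^{⊗(r-1)} ⊗ c_s ⊗ P^{⊗(n-r)}`. -/
def dAll (hm : 1 ≤ m) (F : MajoranaFamily m) (n : ℕ) (j : Fin (2*(m*n))) : MatN m n :=
  dOp F n
    ⟨j.val / (2*m), by
      have h1 := j.isLt
      rw [Nat.div_lt_iff_lt_mul (by omega)]
      have h2 : n * (2*m) = 2*(m*n) := by ring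
      omega⟩
    ⟨j.val % (2*m), Nat.mod_lt _ (by omega)⟩

/-- The index `2m(k-1)+j` (0-based: `2mk + j`) into a family of `2mn` Majorana operators. -/
def bigIdx (m n : ℕ) (k : Fin n) (j : Fin (2*m)) : Fin (2*(m*n)) :=
  ⟨2*m*k.val + j.val, by
    have hk : k.val + 1 ≤ n := k.isLt
    have hj := j.isLt
    have h1 : 2*m*(k.val+1) = 2*m*k.val + 2*m := by ring
    have h2 : 2*m*(k.val+1) ≤ 2*m*n := Nat.mul_le_mul le_rfl hk
    have h3 : 2*m*n = 2*(m*n) := by ring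
    omega⟩

/-- `Γ^{k,l} = Σ_{j=1}^{2m} (-1)^{m-j} e_{2m(k-1)+j} · e_{2m(l-1)+1} ⋯ ê_{2m(l-1)+j} ⋯ e_{2ml}`. -/
def GammaKL (m n : ℕ) (E : MajoranaFamily (m*n)) (k l : Fin n) :
    Matrix (Fin (2^(m*n))) (Fin (2^(m*n))) ℂ :=
  ∑ j : Fin (2*m), ((-1:ℂ) ^ ((m:ℤ) - (j.val+1 : ℤ))) •
    (E.c (bigIdx m n k j) *
      (((List.finRange (2*m)).filter (fun i => i ≠ j)).map
        (fun i => E.c (bigIdx m n l i))).prod)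

/-- `C = i^{mn} e_1 ⋯ e_{2mn}`. -/
def bigParity (m n : ℕ) (E : MajoranaFamily (m*n)) :
    Matrix (Fin (2^(m*n))) (Fin (2^(m*n))) ℂ :=
  (Complex.I ^ (m*n)) • (((List.finRange (2*(m*n))).map E.c).prod)

/-- The `n`-fold tensor power `A^{⊗n}` of a matrix on `ℂ^N`. -/
def tpow (n : ℕ) (A : Mat m) : MatN m n := fun x y => ∏ k, A (x k) (y k)

/-!
Write `v = vec X`. Then `Λ v = vec (∑ⱼ cⱼ X cⱼᵀ)`, and the maps `Φ_S X = c_S X c_Sᵀ`, where `c_S` is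
the ordered product of the `cⱼ` with `j ∈ S`, form a representation of `(Finset, ∆) ≃ (ℤ/2)^{2m}`:
`c_S c_T = ± c_{S ∆ T}` and the sign cancels in `Φ`. The `N² = 2^{2m}` unitaries `c_S` are
trace-orthogonal, so they satisfy a completeness relation, which reads
`∑_S (-1)^C(|S|,2) Φ_S X = 2^m Xᵀ` because `c_Sᴴ = (-1)^C(|S|,2) c_S`.
Split `X` into isotypic parts for the characters `χ_A(S) = (-1)^{|A ∩ S|}`. On the `χ_A`-part
`∑ⱼ Φ_{j}` acts as `2m - 2|A|`, so `∑ⱼ Φ_{j} X = 0` leaves only parts with `|A| = m`; on those,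
`∑_S (-1)^C(|S|,2) χ_A(S) = Re ((1 - i) (1 + i)^m (1 - i)^m) = 2^m`. Hence `2^m Xᵀ = 2^m X`.
-/

lemma eq_smul_of_sq_eq_one {M : Type*} [AddCommGroup M] [Module ℂ M] {σ : ℂ} (hσ : σ ^ 2 = 1)
    {x y : M} (h : x = σ • y) : y = σ • x := by
  rw [h, smul_smul, ← pow_two, hσ, one_smul]

lemma Matrix.trace_mul_eq_zero_of_anticomm {n : Type*} [Fintype n] {A B : Matrix n n ℂ}
    (h : A * B = -(B * A)) : (A * B).trace = 0 := by
  have h2 : (A * B).trace = -(A * B).trace := by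
    conv_lhs => rw [h]
    rw [trace_neg, trace_mul_comm]
  linear_combination h2 / 2

lemma Finset.singleton_symmDiff_of_notMem {α : Type*} [DecidableEq α] {j : α} {T : Finset α}
    (hj : j ∉ T) : symmDiff {j} T = insert j T := by
  ext x
  by_cases hx : x = j <;> simp [mem_symmDiff, hx, hj]

lemma Finset.singleton_symmDiff_of_mem {α : Type*} [DecidableEq α] {j : α} {S : Finset α}
    (hj : j ∈ S) : symmDiff {j} S = S.erase j := by
  ext x
  by_cases hx : x = j <;> simp [mem_symmDiff, hx, hj]

lemma Finset.sum_comp_symmDiff {ι M : Type*} [Fintype ι] [DecidableEq ι] [AddCommMonoid M]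
    (T : Finset ι) (f : Finset ι → M) :
    ∑ S, f (symmDiff T S) = ∑ S, f S :=
  Equiv.sum_comp (Function.Involutive.toPerm _ fun S => symmDiff_symmDiff_cancel_left T S) f

section ParityCharacter

variable {ι : Type*} [DecidableEq ι]

-- The character `S ↦ (-1) ^ #(A ∩ S)` of the group `(Finset ι, ∆) ≃ (ℤ/2)^ι`.
def parityChar (A S : Finset ι) : ℂ := ∏ j ∈ S, if j ∈ A then -1 else 1

lemma parityChar_comm (A S : Finset ι) : parityChar A S = parityChar S A := by
  simp only [parityChar, prod_ite_mem, inter_comm]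

lemma parityChar_symmDiff (A S T : Finset ι) :
    parityChar A (symmDiff S T) = parityChar A S * parityChar A T := by
  rw [parityChar_comm, parityChar_comm A S, parityChar_comm A T]
  simp only [parityChar, ← prod_mul_distrib]
  refine prod_congr rfl fun j _ => ?_
  by_cases hS : j ∈ S <;> by_cases hT : j ∈ T <;> simp [Finset.mem_symmDiff, hS, hT]

variable [Fintype ι]

lemma sum_parityChar (S : Finset ι) :
    ∑ A, parityChar A S = if S = ∅ then 2 ^ Fintype.card ι else 0 := by
  simp_rw [parityChar_comm _ S, parityChar]
  rw [← powerset_univ, ← prod_one_add]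
  split_ifs with hS
  · simp [hS, one_add_one_eq_two]
  · obtain ⟨j, hj⟩ := nonempty_iff_ne_empty.mpr hS
    exact prod_eq_zero (mem_univ j) (by simp [hj])

lemma sum_parityChar_singleton (A : Finset ι) :
    ∑ j, parityChar A {j} = Fintype.card ι - 2 * #A := by
  have h (j : ι) : parityChar A {j} = 1 - 2 * if j ∈ A then 1 else 0 := by
    split_ifs <;> simp [parityChar, *]; norm_num
  simp [h, sum_sub_distrib, mul_comm]

lemma two_mul_neg_one_pow_choose_two (r : ℕ) :
    2 * (-1 : ℂ) ^ r.choose 2 =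
      (1 - Complex.I) * Complex.I ^ r + (1 + Complex.I) * (-Complex.I) ^ r := by
  induction r using Nat.twoStepInduction with
  | zero => norm_num
  | one =>
    rw [Nat.choose_eq_zero_of_lt one_lt_two]
    ring_nf
    rw [Complex.I_sq]
    norm_num
  | more r ih _ =>
    have hchoose : (r + 2).choose 2 = r.choose 2 + (2 * r + 1) := by
      simp only [Nat.choose_succ_succ, Nat.choose_one_right, Nat.choose_zero_right]
      ring
    rw [hchoose, pow_add, pow_succ, pow_mul, neg_one_sq, one_pow, pow_add _ r 2, pow_add _ r 2]
    linear_combination (-1 : ℂ) * ih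
      - ((1 - Complex.I) * Complex.I ^ r + (1 + Complex.I) * (-Complex.I) ^ r) * Complex.I_sq

lemma sum_pow_card_mul_parityChar (A : Finset ι) (x : ℂ) :
    ∑ S, x ^ #S * parityChar A S = (1 - x) ^ #A * (1 + x) ^ (Fintype.card ι - #A) := by
  have h (S : Finset ι) : x ^ #S * parityChar A S = ∏ j ∈ S, x * if j ∈ A then -1 else 1 := by
    rw [parityChar, prod_mul_distrib, prod_const]
  have h' (j : ι) : 1 + x * (if j ∈ A then -1 else 1) = if j ∈ A then 1 - x else 1 + x := by
    split_ifs <;> ring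
  simp_rw [h, ← powerset_univ, ← prod_one_add, h', prod_ite]
  simp [filter_notMem_eq_sdiff, card_univ_sdiff]

lemma sum_neg_one_pow_choose_two_mul_parityChar (A : Finset ι)
    (hA : Fintype.card ι = 2 * #A) :
    ∑ S, (-1 : ℂ) ^ (#S).choose 2 * parityChar A S = 2 ^ #A := by
  have h (S : Finset ι) : (-1 : ℂ) ^ (#S).choose 2 * parityChar A S =
      ((1 - Complex.I) * (Complex.I ^ #S * parityChar A S)
        + (1 + Complex.I) * ((-Complex.I) ^ #S * parityChar A S)) / 2 := by
    rw [← mul_right_inj' two_ne_zero (a := (2 : ℂ)), ← mul_assoc, two_mul_neg_one_pow_choose_two]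
    ring
  have hI : (1 + Complex.I) * (1 - Complex.I) = 2 := by
    ring_nf
    rw [Complex.I_sq]
    norm_num
  simp_rw [h, ← sum_div, sum_add_distrib, ← mul_sum, sum_pow_card_mul_parityChar, hA,
    show 2 * #A - #A = #A by omega, sub_neg_eq_add, ← sub_eq_add_neg, ← mul_pow, hI,
    mul_comm (1 - Complex.I), hI]
  ring

end ParityCharacter

section IsotypicDecomposition

variable {ι : Type*} [Fintype ι] [DecidableEq ι] {V : Type*} [AddCommGroup V] [Module ℂ V]
  (Φ : Finset ι → Module.End ℂ V)

-- `2 ^ card ι` times the projection onto the `parityChar A`-isotypic part of the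
-- representation `Φ` of `(Finset ι, ∆)`.
def isotypicProj (A : Finset ι) : Module.End ℂ V := ∑ S, parityChar A S • Φ S

lemma sum_isotypicProj (hΦ₀ : Φ ∅ = 1) :
    ∑ A, isotypicProj Φ A = (2 : ℂ) ^ Fintype.card ι • 1 := by
  simp_rw [isotypicProj]
  rw [sum_comm]
  simp_rw [← sum_smul, sum_parityChar, ite_smul, zero_smul, sum_ite_eq', mem_univ, if_true, hΦ₀]

variable {Φ} (hΦ : ∀ S T, Φ S * Φ T = Φ (symmDiff S T))
include hΦ

lemma mul_isotypicProj (A T : Finset ι) :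
    Φ T * isotypicProj Φ A = parityChar A T • isotypicProj Φ A := by
  calc Φ T * isotypicProj Φ A
      = ∑ S, parityChar A (symmDiff T (symmDiff T S)) • Φ (symmDiff T S) := by
        simp [isotypicProj, mul_sum, hΦ]
    _ = ∑ S, parityChar A (symmDiff T S) • Φ S :=
        Finset.sum_comp_symmDiff T fun X => parityChar A (symmDiff T X) • Φ X
    _ = parityChar A T • isotypicProj Φ A := by
        simp [parityChar_symmDiff, isotypicProj, smul_sum, mul_smul]

lemma isotypicProj_mul (A T : Finset ι) :
    isotypicProj Φ A * Φ T = parityChar A T • isotypicProj Φ A := by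
  have hcomm : Commute (Φ T) (isotypicProj Φ A) := by
    refine Commute.sum_right _ _ _ fun S _ => Commute.smul_right ?_ _
    rw [Commute, SemiconjBy, hΦ, hΦ, symmDiff_comm]
  rw [← hcomm.eq, mul_isotypicProj hΦ]

lemma isotypicProj_apply_eq_zero (hn : Fintype.card ι ≠ 2 * #A) {v : V}
    (hv : ∑ j, Φ {j} v = 0) : isotypicProj Φ A v = 0 := by
  have h := congrArg (isotypicProj Φ A) hv
  simp only [map_sum, map_zero, ← Module.End.mul_apply, isotypicProj_mul hΦ,
    LinearMap.smul_apply, ← sum_smul, sum_parityChar_singleton] at h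
  refine (smul_eq_zero.mp h).resolve_left ?_
  exact sub_ne_zero.mpr (by exact_mod_cast hn)

lemma sum_neg_one_pow_choose_two_smul_apply {m : ℕ} (hΦ₀ : Φ ∅ = 1)
    (hn : Fintype.card ι = 2 * m) {v : V} (hv : ∑ j, Φ {j} v = 0) :
    ∑ S, (-1 : ℂ) ^ (#S).choose 2 • Φ S v = (2 : ℂ) ^ m • v := by
  set T := ∑ S, (-1 : ℂ) ^ (#S).choose 2 • Φ S
  have hT (A : Finset ι) : T (isotypicProj Φ A v) = (2 : ℂ) ^ m • isotypicProj Φ A v := by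
    by_cases hA : Fintype.card ι = 2 * #A
    · have h : T * isotypicProj Φ A = (2 : ℂ) ^ #A • isotypicProj Φ A := by
        simp only [T, sum_mul, smul_mul_assoc, mul_isotypicProj hΦ, smul_smul, ← sum_smul,
          sum_neg_one_pow_choose_two_mul_parityChar A hA]
      rw [← Module.End.mul_apply, h, show #A = m by omega, LinearMap.smul_apply]
    · rw [isotypicProj_apply_eq_zero hΦ hA hv, map_zero, smul_zero]
  have hsum : ∑ A, isotypicProj Φ A v = (2 : ℂ) ^ Fintype.card ι • v := by
    rw [← LinearMap.sum_apply, sum_isotypicProj Φ hΦ₀, LinearMap.smul_apply, Module.End.one_apply]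
  have h : (2 : ℂ) ^ Fintype.card ι • T v = (2 : ℂ) ^ Fintype.card ι • (2 : ℂ) ^ m • v := by
    rw [← map_smul, ← hsum, map_sum, sum_congr rfl fun A _ => hT A, ← smul_sum, hsum, smul_comm]
  simpa [T] using smul_right_injective V (pow_ne_zero _ two_ne_zero) h

end IsotypicDecomposition

namespace MajoranaFamily

variable {m : ℕ} (F : MajoranaFamily m)

def listProd (l : List (Fin (2 * m))) : Mat m := (l.map F.c).prod

@[simp] lemma listProd_nil : F.listProd [] = 1 := rfl

@[simp] lemma listProd_cons (j : Fin (2 * m)) (l : List (Fin (2 * m))) :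
    F.listProd (j :: l) = F.c j * F.listProd l := List.prod_cons

lemma listProd_append (l₁ l₂ : List (Fin (2 * m))) :
    F.listProd (l₁ ++ l₂) = F.listProd l₁ * F.listProd l₂ := by
  simp [listProd]

lemma listProd_mul_of_notMem {j : Fin (2 * m)} {l : List (Fin (2 * m))} (hj : j ∉ l) :
    F.listProd l * F.c j = (-1 : ℂ) ^ l.length • (F.c j * F.listProd l) := by
  induction l with
  | nil => simp
  | cons a t ih =>
    rw [List.mem_cons, not_or] at hj
    rw [listProd_cons, mul_assoc, ih hj.2, mul_smul_comm, ← mul_assoc,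
      F.anticomm a j (Ne.symm hj.1), neg_mul, mul_assoc, smul_neg, List.length_cons, pow_succ,
      mul_neg_one, neg_smul]

lemma listProd_reverse {l : List (Fin (2 * m))} (hl : l.Nodup) :
    F.listProd l.reverse = (-1 : ℂ) ^ l.length.choose 2 • F.listProd l := by
  induction l with
  | nil => simp
  | cons a t ih =>
    rw [List.nodup_cons] at hl
    have hsingle : F.listProd [a] = F.c a := by simp [listProd]
    rw [List.reverse_cons, listProd_append, ih hl.2, smul_mul_assoc, hsingle,
      F.listProd_mul_of_notMem hl.1, smul_smul, ← pow_add, List.length_cons,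
      Nat.choose_succ_succ', Nat.choose_one_right, add_comm t.length, listProd_cons]

lemma conjTranspose_listProd (l : List (Fin (2 * m))) :
    (F.listProd l)ᴴ = F.listProd l.reverse := by
  have h : conjTranspose ∘ F.c = F.c := funext fun j => (F.herm j).eq
  simp [listProd, conjTranspose_list_prod, List.map_reverse, h]

lemma listProd_mem_unitary (l : List (Fin (2 * m))) : F.listProd l ∈ unitary (Mat m) :=
  Submonoid.list_prod_mem _ fun _ hA => by
    obtain ⟨j, -, rfl⟩ := List.mem_map.mp hA
    exact Unitary.mem_iff.mpr ⟨by rw [star_eq_conjTranspose, (F.herm j).eq, F.sq],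
      by rw [star_eq_conjTranspose, (F.herm j).eq, F.sq]⟩

lemma listProd_eq_smul_of_perm {l₁ l₂ : List (Fin (2 * m))} (hp : l₁.Perm l₂) (hl : l₁.Nodup) :
    ∃ σ : ℂ, σ ^ 2 = 1 ∧ F.listProd l₁ = σ • F.listProd l₂ := by
  induction hp with
  | nil => exact ⟨1, one_pow 2, (one_smul ℂ _).symm⟩
  | cons x _ ih =>
    obtain ⟨σ, hσ, h⟩ := ih (List.nodup_cons.mp hl).2
    exact ⟨σ, hσ, by rw [listProd_cons, listProd_cons, h, mul_smul_comm]⟩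
  | swap x y l =>
    have hxy : y ≠ x := fun h => (List.nodup_cons.mp hl).1 (h ▸ List.mem_cons_self)
    refine ⟨-1, by norm_num, ?_⟩
    simp only [listProd_cons, ← mul_assoc, F.anticomm y x hxy, neg_mul, neg_smul, one_smul]
  | trans h₁₂ _ ih₁ ih₂ =>
    obtain ⟨σ, hσ, h⟩ := ih₁ hl
    obtain ⟨τ, hτ, h'⟩ := ih₂ (h₁₂.nodup_iff.mp hl)
    exact ⟨σ * τ, by rw [mul_pow, hσ, hτ, one_mul], by rw [h, h', smul_smul]⟩

lemma majProd_eq_listProd (S : Finset (Fin (2 * m))) :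
    majProd F S = F.listProd (S.sort (· ≤ ·)) :=
  rfl

lemma listProd_eq_smul_majProd {l : List (Fin (2 * m))} (hl : l.Nodup) :
    ∃ σ : ℂ, σ ^ 2 = 1 ∧ F.listProd l = σ • majProd F l.toFinset :=
  F.listProd_eq_smul_of_perm (List.perm_of_nodup_nodup_toFinset_eq hl (sort_nodup _ _)
    (sort_toFinset _ _).symm) hl

@[simp] lemma majProd_empty : majProd F ∅ = 1 := by
  rw [majProd_eq_listProd, sort_empty, listProd_nil]

@[simp] lemma majProd_singleton (j : Fin (2 * m)) : majProd F {j} = F.c j := by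
  rw [majProd_eq_listProd, sort_singleton, listProd_cons, listProd_nil, mul_one]

lemma conjTranspose_majProd (S : Finset (Fin (2 * m))) :
    (majProd F S)ᴴ = (-1 : ℂ) ^ (#S).choose 2 • majProd F S := by
  rw [majProd_eq_listProd, conjTranspose_listProd, F.listProd_reverse (sort_nodup _ _),
    length_sort]

lemma majProd_mul_conjTranspose (S : Finset (Fin (2 * m))) :
    majProd F S * (majProd F S)ᴴ = 1 :=
  Unitary.mul_star_self_of_mem (F.listProd_mem_unitary _)

lemma c_mul_majProd (j : Fin (2 * m)) (S : Finset (Fin (2 * m))) :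
    ∃ σ : ℂ, σ ^ 2 = 1 ∧ F.c j * majProd F S = σ • majProd F (symmDiff {j} S) := by
  by_cases hj : j ∈ S
  · obtain ⟨σ, hσ, h⟩ := F.listProd_eq_smul_majProd (l := j :: (S.erase j).sort (· ≤ ·))
      ((sort_nodup _ _).cons (by simp [mem_sort]))
    rw [listProd_cons, List.toFinset_cons, sort_toFinset, insert_erase hj,
      ← majProd_eq_listProd] at h
    refine ⟨σ, hσ, ?_⟩
    have hS : majProd F S = σ • (F.c j * majProd F (S.erase j)) := eq_smul_of_sq_eq_one hσ h
    rw [hS, mul_smul_comm, ← mul_assoc, F.sq, one_mul, singleton_symmDiff_of_mem hj]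
  · obtain ⟨σ, hσ, h⟩ := F.listProd_eq_smul_majProd (l := j :: S.sort (· ≤ ·))
      ((sort_nodup _ _).cons (by simpa [mem_sort] using hj))
    rw [listProd_cons, List.toFinset_cons, sort_toFinset] at h
    refine ⟨σ, hσ, ?_⟩
    rw [majProd_eq_listProd, h, singleton_symmDiff_of_notMem hj]

lemma majProd_mul_majProd (T S : Finset (Fin (2 * m))) :
    ∃ σ : ℂ, σ ^ 2 = 1 ∧ majProd F T * majProd F S = σ • majProd F (symmDiff T S) := by
  induction T using Finset.induction_on with
  | empty => exact ⟨1, one_pow 2, by rw [majProd_empty, one_mul, one_smul, ← bot_eq_empty,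
      bot_symmDiff]⟩
  | insert j T hj ih =>
    have hins := singleton_symmDiff_of_notMem hj
    obtain ⟨σ₁, hσ₁, h₁⟩ := F.c_mul_majProd j T
    obtain ⟨σ₂, hσ₂, h₂⟩ := ih
    obtain ⟨σ₃, hσ₃, h₃⟩ := F.c_mul_majProd j (symmDiff T S)
    rw [hins] at h₁
    refine ⟨σ₁ * σ₂ * σ₃, by rw [mul_pow, mul_pow, hσ₁, hσ₂, hσ₃, one_mul, one_mul], ?_⟩
    rw [eq_smul_of_sq_eq_one hσ₁ h₁, smul_mul_assoc, mul_assoc, h₂, mul_smul_comm, h₃,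
      ← symmDiff_assoc, hins, smul_smul, smul_smul]

lemma majProd_mul_c_of_notMem {j : Fin (2 * m)} {S : Finset (Fin (2 * m))} (hj : j ∉ S) :
    majProd F S * F.c j = (-1 : ℂ) ^ #S • (F.c j * majProd F S) := by
  rw [majProd_eq_listProd, F.listProd_mul_of_notMem (by simpa [mem_sort] using hj), length_sort]

lemma trace_majProd {S : Finset (Fin (2 * m))} (hS : S ≠ ∅) : (majProd F S).trace = 0 := by
  rcases Nat.even_or_odd #S with heven | hodd
  · obtain ⟨j, hj⟩ := nonempty_iff_ne_empty.mpr hS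
    obtain ⟨σ, hσ, h⟩ := F.c_mul_majProd j (S.erase j)
    rw [singleton_symmDiff_of_notMem (notMem_erase j S), insert_erase hj] at h
    have hodd : Odd #(S.erase j) := by
      rw [card_erase_of_mem hj]
      exact Nat.Even.sub_odd (card_pos.mpr ⟨j, hj⟩) heven odd_one
    rw [eq_smul_of_sq_eq_one hσ h, trace_smul, trace_mul_eq_zero_of_anticomm, smul_zero]
    rw [majProd_mul_c_of_notMem _ (notMem_erase j S), hodd.neg_one_pow, neg_one_smul, neg_neg]
  · obtain ⟨j, hj⟩ : ∃ j, j ∉ S := by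
      by_contra! h
      rw [eq_univ_of_forall h, card_univ, Fintype.card_fin] at hodd
      exact Nat.not_odd_iff_even.mpr (even_two_mul m) hodd
    have hanti : majProd F S * F.c j * F.c j = -(F.c j * (majProd F S * F.c j)) := by
      rw [mul_assoc (majProd F S), F.sq, mul_one, majProd_mul_c_of_notMem _ hj, hodd.neg_one_pow,
        neg_one_smul, mul_neg, neg_neg, ← mul_assoc, F.sq, one_mul]
    rw [← trace_mul_eq_zero_of_anticomm hanti, mul_assoc, F.sq, mul_one]

lemma trace_majProd_mul_conjTranspose (S T : Finset (Fin (2 * m))) :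
    (majProd F S * (majProd F T)ᴴ).trace = if S = T then 2 ^ m else 0 := by
  split_ifs with hST
  · rw [hST, majProd_mul_conjTranspose, trace_one]
    simp
  · obtain ⟨σ, -, h⟩ := F.majProd_mul_majProd S T
    rw [conjTranspose_majProd, mul_smul_comm, h, trace_smul, trace_smul,
      F.trace_majProd (by rwa [← bot_eq_empty, Ne, symmDiff_eq_bot]), smul_zero, smul_zero]

lemma sum_star_majProd_mul_majProd (a b c d : Fin (2 ^ m)) :
    ∑ S, star (majProd F S c d) * majProd F S a b = if (c, d) = (a, b) then 2 ^ m else 0 := by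
  -- The `N²` rows of `W` are orthogonal of squared norm `N`, hence so are its columns.
  let W : Matrix (Finset (Fin (2 * m))) (Fin (2 ^ m) × Fin (2 ^ m)) ℂ :=
    of fun S p => majProd F S p.1 p.2
  have hWW : W * Wᴴ = (2 : ℂ) ^ m • 1 := by
    ext S T
    have h : ∑ p, W S p * Wᴴ p T = (majProd F S * (majProd F T)ᴴ).trace := by
      simp [W, trace, mul_apply, Fintype.sum_prod_type]
    rw [mul_apply, h, trace_majProd_mul_conjTranspose, Matrix.smul_apply, one_apply]
    split_ifs <;> simp
  have hW : W * ((2 ^ m : ℂ)⁻¹ • Wᴴ) = 1 := by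
    rw [Matrix.mul_smul, hWW, smul_smul, inv_mul_cancel₀ (pow_ne_zero m two_ne_zero), one_smul]
  have e : Finset (Fin (2 * m)) ≃ Fin (2 ^ m) × Fin (2 ^ m) := Fintype.equivOfCardEq (by
    rw [Fintype.card_finset, Fintype.card_prod, Fintype.card_fin, Fintype.card_fin, pow_mul',
      pow_two])
  have h := congrFun (congrFun ((mul_eq_one_comm_of_equiv e).mp hW) (c, d)) (a, b)
  simp only [Matrix.smul_apply, mul_apply, one_apply, W, conjTranspose_apply,
    of_apply, smul_eq_mul, mul_assoc, ← mul_sum] at h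
  rw [← mul_right_inj' (inv_ne_zero (pow_ne_zero m two_ne_zero)), h]
  split_ifs <;> simp

lemma sum_smul_majProd_mul_mul_transpose (M : Mat m) :
    ∑ S, (-1 : ℂ) ^ (#S).choose 2 • (majProd F S * M * (majProd F S)ᵀ) = (2 : ℂ) ^ m • Mᵀ := by
  have h (S : Finset (Fin (2 * m))) : (-1 : ℂ) ^ (#S).choose 2 • (majProd F S * M * (majProd F S)ᵀ)
      = majProd F S * M * (majProd F S)ᴴᵀ := by
    rw [conjTranspose_majProd, transpose_smul, mul_smul_comm]
  simp_rw [h]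
  ext a d
  calc (∑ S, majProd F S * M * (majProd F S)ᴴᵀ) a d
      = ∑ b, ∑ c, M b c * ∑ S, star (majProd F S c d) * majProd F S a b := by
        simp only [Matrix.sum_apply, mul_apply, transpose_apply, conjTranspose_apply, sum_mul,
          mul_sum]
        simp_rw [sum_comm (s := (univ : Finset (Finset (Fin (2 * m)))))]
        rw [sum_comm]
        exact sum_congr rfl fun b _ => sum_congr rfl fun c _ => sum_congr rfl fun S _ => by ring
    _ = ((2 : ℂ) ^ m • Mᵀ) a d := by
        simp only [sum_star_majProd_mul_majProd, Prod.mk.injEq, mul_ite, mul_zero, ite_and]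
        simp [sum_ite_eq', mul_comm]

def sandwich (S : Finset (Fin (2 * m))) : Module.End ℂ (Mat m) :=
  LinearMap.mulLeftRight ℂ (majProd F S, (majProd F S)ᵀ)

lemma sandwich_empty : F.sandwich ∅ = 1 := by
  ext1 M
  simp [sandwich]

lemma sandwich_mul (S T : Finset (Fin (2 * m))) :
    F.sandwich S * F.sandwich T = F.sandwich (symmDiff S T) := by
  obtain ⟨σ, hσ, h⟩ := F.majProd_mul_majProd S T
  ext1 M
  simp only [sandwich, Module.End.mul_apply, LinearMap.mulLeftRight_apply]
  rw [eq_smul_of_sq_eq_one hσ h, transpose_smul, transpose_mul, smul_mul_assoc, smul_mul_assoc,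
    mul_smul_comm, smul_smul, ← pow_two, hσ, one_smul]
  simp only [mul_assoc]

end MajoranaFamily

theorem stmt_8_general (m : ℕ) (F : MajoranaFamily m)
    (v : Fin (2^m) × Fin (2^m) → ℂ) (hv : (Lambda F).mulVec v = 0) :
    (fun p : Fin (2^m) × Fin (2^m) => v (p.2, p.1)) = v := by
  set X : Mat m := of fun i j => v (j, i)
  have hX : ∑ j, F.sandwich {j} X = 0 := by
    rw [show v = vec X from rfl, Lambda, sum_mulVec] at hv
    simp_rw [kronecker_mulVec_vec, ← vec_sum, vec_eq_zero_iff] at hv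
    simpa [MajoranaFamily.sandwich] using hv
  have h := sum_neg_one_pow_choose_two_smul_apply F.sandwich_mul F.sandwich_empty
    (Fintype.card_fin _) hX
  simp only [MajoranaFamily.sandwich, LinearMap.mulLeftRight_apply,
    F.sum_smul_majProd_mul_mul_transpose] at h
  exact congrArg vec (smul_right_injective _ (pow_ne_zero m two_ne_zero) h)

/-- The null space of `Λ` is contained in the symmetric subspace: `Λ v = 0` implies
`P v = v`, where `P` is the swap operator. -/
theorem stmt_8 (m : ℕ) (hm : 1 ≤ m) (F : MajoranaFamily m)
    (v : Fin (2^m) × Fin (2^m) → ℂ) (hv : (Lambda F).mulVec v = 0) :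
    (fun p : Fin (2^m) × Fin (2^m) => v (p.2, p.1)) = v :=
  stmt_8_general m F v hv

end
end

section
/- Let ρ be an even state on ℂ^N with correlation matrix M. Then Mᵀ M ≤ I as real symmetric 2m×2m matrices; equivalently, all singular values of M lie in the interval [0, 1]. -/
open Matrix Kronecker Finset
open scoped ComplexOrder

noncomputable section

variable {m : ℕ}

/-
For real vectors `u, v` put `a = ∑ uⱼ cⱼ` and `b = ∑ vⱼ cⱼ`. The Clifford relations give
`a² = |u|²` and `b² = |v|²`, while the definition of `M` gives `Tr ρ [a, b] = -2i ⟨u, M v⟩`.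
Positivity of `Tr ρ (a + i b)(a + i b)ᴴ` therefore reads `2 ⟨u, M v⟩ ≤ |u|² + |v|²`, and the
choice `u = M v` turns this into `|M v|² ≤ |v|²`.
-/

theorem Matrix.posSemidef_one_sub_transpose_mul_self_of_forall_le {n : Type*} [Fintype n]
    [DecidableEq n] {M : Matrix n n ℝ} (hM : ∀ u v, 2 * (u ⬝ᵥ M *ᵥ v) ≤ u ⬝ᵥ u + v ⬝ᵥ v) :
    (1 - Mᵀ * M).PosSemidef := by
  have hsymm : (Mᵀ * M).IsHermitian := by
    simpa [conjTranspose_eq_transpose_of_trivial] using isHermitian_conjTranspose_mul_self M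
  refine .of_dotProduct_mulVec_nonneg (isHermitian_one.sub hsymm) fun v => ?_
  have h := hM (M *ᵥ v) v
  rw [star_trivial, sub_mulVec, one_mulVec, dotProduct_sub, ← mulVec_mulVec, dotProduct_mulVec,
    vecMul_transpose]
  linarith

theorem Matrix.IsHermitian.add_I_smul_mul_conjTranspose {n : Type*} [Fintype n]
    {A B : Matrix n n ℂ} (hA : A.IsHermitian) (hB : B.IsHermitian) :
    (A + Complex.I • B) * (A + Complex.I • B)ᴴ = A * A + B * B - Complex.I • (A * B - B * A) := by
  rw [conjTranspose_add, conjTranspose_smul, hA.eq, hB.eq]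
  simp only [Complex.star_def, Complex.conj_I, add_mul, mul_add, neg_smul, mul_neg,
    Matrix.smul_mul, Matrix.mul_smul, smul_smul, Complex.I_mul_I]
  module

namespace MajoranaFamily

section LinComb

variable (F : MajoranaFamily m)

def linComb (u : Fin (2*m) → ℝ) : Mat m := ∑ j, (u j : ℂ) • F.c j

lemma linComb_isHermitian (u : Fin (2*m) → ℝ) : (F.linComb u).IsHermitian := by
  simp only [linComb, IsHermitian, conjTranspose_sum, conjTranspose_smul, (F.herm _).eq,
    Complex.star_def, Complex.conj_ofReal]

lemma c_mul_add_c_mul (j k : Fin (2*m)) :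
    F.c j * F.c k + F.c k * F.c j = if j = k then 2 else 0 := by
  split_ifs with h
  · rw [h, F.sq, one_add_one_eq_two]
  · rw [F.anticomm j k h, neg_add_cancel]

lemma linComb_mul_linComb (u v : Fin (2*m) → ℝ) :
    F.linComb u * F.linComb v = ∑ j, ∑ k, ((u j : ℂ) * v k) • (F.c j * F.c k) := by
  rw [linComb, linComb, sum_mul]
  simp_rw [mul_sum, Matrix.smul_mul, Matrix.mul_smul, smul_smul]

lemma linComb_mul_linComb_swap (u v : Fin (2*m) → ℝ) :
    F.linComb v * F.linComb u = ∑ j, ∑ k, ((u j : ℂ) * v k) • (F.c k * F.c j) := by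
  rw [linComb_mul_linComb]
  refine Finset.sum_comm.trans (sum_congr rfl fun j _ => sum_congr rfl fun k _ => ?_)
  rw [mul_comm (v k : ℂ)]

lemma linComb_mul_add_mul (u v : Fin (2*m) → ℝ) :
    F.linComb u * F.linComb v + F.linComb v * F.linComb u = ((2 * (u ⬝ᵥ v) : ℝ) : ℂ) • 1 := by
  rw [F.linComb_mul_linComb u v, F.linComb_mul_linComb_swap u v]
  simp only [← sum_add_distrib, ← smul_add, c_mul_add_c_mul, smul_ite, smul_zero, sum_ite_eq,
    mem_univ, if_true, dotProduct, Finset.mul_sum]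
  push_cast
  rw [sum_smul]
  refine sum_congr rfl fun j _ => ?_
  rw [mul_comm 2, mul_smul _ (2 : ℂ), two_smul, one_add_one_eq_two]

lemma linComb_mul_self (u : Fin (2*m) → ℝ) :
    F.linComb u * F.linComb u = ((u ⬝ᵥ u : ℝ) : ℂ) • 1 := by
  have h := F.linComb_mul_add_mul u u
  rw [← two_smul ℂ, Complex.ofReal_mul, ← smul_smul] at h
  exact smul_right_injective _ two_ne_zero h

lemma linComb_commutator (u v : Fin (2*m) → ℝ) :
    F.linComb u * F.linComb v - F.linComb v * F.linComb u =
      ∑ j, ∑ k, ((u j : ℂ) * v k) • (F.c j * F.c k - F.c k * F.c j) := by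
  rw [F.linComb_mul_linComb u v, F.linComb_mul_linComb_swap u v]
  simp only [← sum_sub_distrib, ← smul_sub]

end LinComb

def IsCorrelationMatrix (F : MajoranaFamily m) (ρ : Mat m)
    (M : Matrix (Fin (2*m)) (Fin (2*m)) ℝ) : Prop :=
  ∀ j k, (M j k : ℂ) = Complex.I / 2 * (ρ * (F.c j * F.c k - F.c k * F.c j)).trace

namespace IsCorrelationMatrix

variable {F : MajoranaFamily m} {ρ : Mat m} {M : Matrix (Fin (2*m)) (Fin (2*m)) ℝ}

lemma trace_mul_c_commutator (hM : F.IsCorrelationMatrix ρ M) (j k : Fin (2*m)) :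
    (ρ * (F.c j * F.c k - F.c k * F.c j)).trace = -2 * Complex.I * M j k := by
  linear_combination
    (2 * Complex.I) * hM j k + (ρ * (F.c j * F.c k - F.c k * F.c j)).trace * Complex.I_sq

lemma trace_mul_linComb_commutator (hM : F.IsCorrelationMatrix ρ M) (u v : Fin (2*m) → ℝ) :
    (ρ * (F.linComb u * F.linComb v - F.linComb v * F.linComb u)).trace =
      -2 * Complex.I * (u ⬝ᵥ M *ᵥ v : ℝ) := by
  simp only [linComb_commutator, mul_sum, trace_sum, Matrix.mul_smul, trace_smul, smul_eq_mul,
    hM.trace_mul_c_commutator, dotProduct, mulVec]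
  push_cast
  simp only [Finset.mul_sum]
  exact sum_congr rfl fun j _ => sum_congr rfl fun k _ => by ring

lemma two_mul_dotProduct_mulVec_le (hρ : IsState ρ) (hM : F.IsCorrelationMatrix ρ M)
    (u v : Fin (2*m) → ℝ) : 2 * (u ⬝ᵥ M *ᵥ v) ≤ u ⬝ᵥ u + v ⬝ᵥ v := by
  set X := F.linComb u + Complex.I • F.linComb v
  have htrace_sq (w : Fin (2*m) → ℝ) :
      (ρ * (F.linComb w * F.linComb w)).trace = (w ⬝ᵥ w : ℝ) := by
    rw [linComb_mul_self, Matrix.mul_smul, mul_one, trace_smul, hρ.2, smul_eq_mul, mul_one]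
  have htrace : (ρ * (X * Xᴴ)).trace = (u ⬝ᵥ u + v ⬝ᵥ v - 2 * (u ⬝ᵥ M *ᵥ v) : ℝ) := by
    rw [(F.linComb_isHermitian u).add_I_smul_mul_conjTranspose (F.linComb_isHermitian v), mul_sub,
      mul_add, trace_sub, trace_add, htrace_sq, htrace_sq, Matrix.mul_smul, trace_smul,
      hM.trace_mul_linComb_commutator, smul_eq_mul]
    push_cast
    linear_combination (2 * ((u ⬝ᵥ M *ᵥ v : ℝ) : ℂ)) * Complex.I_sq
  have hnonneg : 0 ≤ (ρ * (X * Xᴴ)).trace := by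
    rw [← Matrix.mul_assoc, trace_mul_comm, ← Matrix.mul_assoc]
    exact (hρ.1.conjTranspose_mul_mul_same X).trace_nonneg
  rw [htrace] at hnonneg
  exact sub_nonneg.mp (Complex.zero_le_real.mp hnonneg)

end IsCorrelationMatrix

end MajoranaFamily

theorem stmt_11_general (m : ℕ) (F : MajoranaFamily m) (ρ : Mat m)
    (hρ : IsState ρ)
    (M : Matrix (Fin (2*m)) (Fin (2*m)) ℝ)
    (hM : ∀ j k, (M j k : ℂ) =
      Complex.I / 2 * (ρ * (F.c j * F.c k - F.c k * F.c j)).trace) :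
    ((1 : Matrix (Fin (2*m)) (Fin (2*m)) ℝ) - Mᵀ * M).PosSemidef :=
  Matrix.posSemidef_one_sub_transpose_mul_self_of_forall_le
    (MajoranaFamily.IsCorrelationMatrix.two_mul_dotProduct_mulVec_le hρ hM)

/-- For an even state `ρ` with correlation matrix `M`, one has `Mᵀ M ≤ I`. -/
theorem stmt_11 (m : ℕ) (hm : 1 ≤ m) (F : MajoranaFamily m) (ρ : Mat m)
    (hρ : IsState ρ) (hev : IsEven F ρ)
    (M : Matrix (Fin (2*m)) (Fin (2*m)) ℝ)
    (hM : ∀ j k, (M j k : ℂ) =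
      Complex.I / 2 * (ρ * (F.c j * F.c k - F.c k * F.c j)).trace) :
    ((1 : Matrix (Fin (2*m)) (Fin (2*m)) ℝ) - Mᵀ * M).PosSemidef :=
  stmt_11_general m F ρ hρ M hM

end
end
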